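/- arXiv:2409.06969 — 3 statements merged into one kernel-verified Lean document; each statement's English description precedes it below -/
import Mathlib

section
/- There exist a soliton graph G and a set B of bursts for G such that the soliton automaton A_B(G) is perfectly deterministic but not strongly deterministic. -/
/- Formalization of multi-soliton automata (Bordihn–Schulz),
   following the definitions of the paper. -/

namespace Soliton

variable {V : Type}

/-- An undirected, loopless graph on node set `V`. -/
structure SGraph (V : Type) where
  adj : V → V → Prop
  symm : ∀ u v, adj u v → adj v u
  loopless : ∀ v, ¬ adj v v

/-- Degree of a node: the number of neighbours. -/
noncomputable def degree (G : SGraph V) (n : V) : ℕ := Nat.card {v // G.adj n v}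

/-- An exterior node has degree 1. -/
def Exterior (G : SGraph V) (n : V) : Prop := degree G n = 1

/-- An interior node has degree at least 2. -/
def Interior (G : SGraph V) (n : V) : Prop := 2 ≤ degree G n

/-- A weight function: symmetric, with weight in {1,2} exactly on edges and 0 elsewhere. -/
def IsWeighting (G : SGraph V) (w : V → V → ℕ) : Prop :=
  (∀ u v, w u v = w v u) ∧
  (∀ u v, G.adj u v → w u v = 1 ∨ w u v = 2) ∧
  (∀ u v, ¬ G.adj u v → w u v = 0)

/-- The weight of a node: sum of the weights of the incident edges. -/
noncomputable def nodeWeight (w : V → V → ℕ) (n : V) : ℕ := ∑ᶠ v, w n v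

/-- A soliton graph: degrees between 1 and 3, node-weight conditions, and every
component contains an exterior node. -/
def IsSolitonGraph (G : SGraph V) (w : V → V → ℕ) : Prop :=
  IsWeighting G w ∧
  (∀ n, 1 ≤ degree G n ∧ degree G n ≤ 3) ∧
  (∀ n, Exterior G n → nodeWeight w n = 1 ∨ nodeWeight w n = 2) ∧
  (∀ n, Interior G n → nodeWeight w n = degree G n + 1) ∧
  (∀ n, ∃ e, Exterior G e ∧ Relation.ReflTransGen G.adj n e)

/-- A burst `(n₁,n₁')‖_{k₁}(n₂,n₂')‖_{k₂}⋯(n_m,n_m')⊥`: each soliton `i` has an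
entry node, an exit node, and a delay (the delay of the first soliton is 0). -/
structure Burst (V : Type) where
  m : ℕ
  hm : 0 < m
  entry : Fin m → V
  exit : Fin m → V
  delay : Fin m → ℕ
  delay_zero : delay ⟨0, hm⟩ = 0

/-- A burst for a soliton graph: all entry and exit nodes are exterior. -/
def IsBurstFor (G : SGraph V) (b : Burst V) : Prop :=
  ∀ i, Exterior G (b.entry i) ∧ Exterior G (b.exit i)

/-- The arrival time of soliton `i`: the sum of the delays up to and including `i`. -/
def Burst.arrival (b : Burst V) (i : Fin b.m) : ℕ :=
  ∑ j ∈ Finset.univ.filter (fun j => j ≤ i), b.delay j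

/-- The position of a soliton: `wait k` with `k ≥ 1` means `k` steps until entry,
`wait 0` means the soliton has left the graph, and `node n` means it is at node `n`. -/
inductive SolPos (V : Type) where
  | wait : ℕ → SolPos V
  | node : V → SolPos V

/-- The initial position map of a burst. -/
def initPos (b : Burst V) : Fin b.m → SolPos V := fun i =>
  if b.arrival i = 0 then SolPos.node (b.entry i) else SolPos.wait (b.arrival i)

/-- A position map is final if every soliton has left the graph. -/
def IsFinal {m : ℕ} (π : Fin m → SolPos V) : Prop := ∀ i, π i = SolPos.wait 0

/-- A configuration: a weighting of the graph together with a position map. -/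
abbrev Config (V : Type) (m : ℕ) := (V → V → ℕ) × (Fin m → SolPos V)

/-- The one-step (potential successor) relation on the position of a single soliton:
waiting counters decrease, soliton `i` enters at its entry node, a soliton in the
graph moves to an adjacent node, and a soliton may leave only at its exit node. -/
def PosStep (G : SGraph V) (b : Burst V) (i : Fin b.m) (p p' : SolPos V) : Prop :=
  (p = SolPos.wait 0 ∧ p' = SolPos.wait 0) ∨
  (p = SolPos.wait 1 ∧ p' = SolPos.node (b.entry i)) ∨
  (∃ k : ℕ, p = SolPos.wait (k + 2) ∧ p' = SolPos.wait (k + 1)) ∨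
  (∃ n : V, p = SolPos.node n ∧
    ((n = b.exit i ∧ p' = SolPos.wait 0) ∨ (∃ n', G.adj n n' ∧ p' = SolPos.node n')))

/-- Some soliton moves from `p` to `q` in the step from `π` to `π'`. -/
def MovesAlong {m : ℕ} (π π' : Fin m → SolPos V) (p q : V) : Prop :=
  ∃ i, π i = SolPos.node p ∧ π' i = SolPos.node q

/-- The weight of a traversed edge changes from `w` to `3 - w`; all other
weights remain unchanged. -/
def WeightStep {m : ℕ} (w w' : V → V → ℕ) (π π' : Fin m → SolPos V) : Prop :=
  ∀ p q : V,
    ((MovesAlong π π' p q ∨ MovesAlong π π' q p) → w' p q = 3 - w p q) ∧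
    (¬(MovesAlong π π' p q ∨ MovesAlong π π' q p) → w' p q = w p q)

/-- A single step between configurations. -/
def StepOk (G : SGraph V) (b : Burst V) (c c' : Config V b.m) : Prop :=
  (∀ i, PosStep G b i (c.2 i) (c'.2 i)) ∧ WeightStep c.1 c'.1 c.2 c'.2

/-- The conditions of a configuration trail involving two consecutive steps
`c, c', c''`: a soliton that has just entered moves on into the graph; a soliton
reaching its exit node from inside the graph leaves; consecutive edges traversed
by a soliton have alternating weights; a soliton never immediately turns around. -/
def TwoStepOk (G : SGraph V) (b : Burst V) (c c' c'' : Config V b.m) : Prop :=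
  ∀ i : Fin b.m,
    (∀ n : V, c'.2 i = SolPos.node n → Exterior G n → c.2 i = SolPos.wait 1 →
      ∃ r, c''.2 i = SolPos.node r) ∧
    (c'.2 i = SolPos.node (b.exit i) → Exterior G (b.exit i) →
      (∃ p, c.2 i = SolPos.node p) → c''.2 i = SolPos.wait 0) ∧
    (∀ p q r : V, c.2 i = SolPos.node p → c'.2 i = SolPos.node q → Interior G q →
      c''.2 i = SolPos.node r → c.1 p q ≠ c'.1 q r) ∧
    (c''.2 i ≠ SolPos.wait 0 → c''.2 i ≠ c'.2 i ∧ c''.2 i ≠ c.2 i)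

/-- A configuration trail for a soliton graph with weighting `w0` and a burst `b`. -/
def IsTrail (G : SGraph V) (w0 : V → V → ℕ) (b : Burst V) (len : ℕ)
    (cfg : Fin (len + 1) → Config V b.m) : Prop :=
  (cfg 0).1 = w0 ∧ (cfg 0).2 = initPos b ∧
  (∀ (j : ℕ) (h : j < len), StepOk G b (cfg ⟨j, by omega⟩) (cfg ⟨j + 1, by omega⟩)) ∧
  (∀ (h : 1 ≤ len) (i : Fin b.m) (n : V), (cfg 0).2 i = SolPos.node n →
    ∃ n', (cfg ⟨1, by omega⟩).2 i = SolPos.node n') ∧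
  (∀ (j : ℕ) (h : j + 2 ≤ len),
    TwoStepOk G b (cfg ⟨j, by omega⟩) (cfg ⟨j + 1, by omega⟩) (cfg ⟨j + 2, by omega⟩)) ∧
  (∀ (j : ℕ) (h : j < len), ¬ IsFinal (cfg ⟨j, by omega⟩).2)

/-- The legality conditions between two consecutive configurations: two solitons
at the same node move to different nodes, and two solitons never traverse the
same edge in opposite directions in the same step. -/
def LegalStep {m : ℕ} (G : SGraph V) (c c' : Config V m) : Prop :=
  (∀ i i' : Fin m, i ≠ i' → ∀ n : V, c.2 i = SolPos.node n → c.2 i' = SolPos.node n →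
    c'.2 i ≠ c'.2 i') ∧
  (∀ i i' : Fin m, i ≠ i' → ∀ p q : V, c.2 i = SolPos.node p → c.2 i' = SolPos.node q →
    G.adj p q → ¬(c'.2 i = SolPos.node q ∧ c'.2 i' = SolPos.node p))

/-- A legal configuration trail. -/
def IsLegalTrail (G : SGraph V) (w0 : V → V → ℕ) (b : Burst V) (len : ℕ)
    (cfg : Fin (len + 1) → Config V b.m) : Prop :=
  IsTrail G w0 b len cfg ∧
  ∀ (j : ℕ) (h : j < len), LegalStep G (cfg ⟨j, by omega⟩) (cfg ⟨j + 1, by omega⟩)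

/-- A total legal configuration trail: a legal trail whose last position map is final. -/
def IsTotalLegalTrail (G : SGraph V) (w0 : V → V → ℕ) (b : Burst V) (len : ℕ)
    (cfg : Fin (len + 1) → Config V b.m) : Prop :=
  IsLegalTrail G w0 b len cfg ∧ IsFinal (cfg (Fin.last len)).2

/-- `Result(G, b)`: the set of weightings obtained as final graphs of total legal
configuration trails for `(G, w0)` and `b`. -/
def ResultSet (G : SGraph V) (w0 : V → V → ℕ) (b : Burst V) : Set (V → V → ℕ) :=
  {w' | ∃ (len : ℕ) (cfg : Fin (len + 1) → Config V b.m),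
    IsTotalLegalTrail G w0 b len cfg ∧ (cfg (Fin.last len)).1 = w'}

/-- `States(G, B)`: the closure of `{w0}` under taking results of bursts in `B`. -/
inductive InStates (G : SGraph V) (w0 : V → V → ℕ) (B : Set (Burst V)) :
    (V → V → ℕ) → Prop
  | refl : InStates G w0 B w0
  | step {w' w'' : V → V → ℕ} {b : Burst V} (h : InStates G w0 B w') (hb : b ∈ B)
      (hr : w'' ∈ ResultSet G w' b) : InStates G w0 B w''

/-- `States(G, B)` as a set. -/
def StatesSet (G : SGraph V) (w0 : V → V → ℕ) (B : Set (Burst V)) :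
    Set (V → V → ℕ) := {w' | InStates G w0 B w'}

/-- The data of a configuration trail: a length together with a sequence of
configurations. -/
def TrailData (V : Type) (m : ℕ) := Σ len : ℕ, Fin (len + 1) → Config V m

/-- The trail data is a total legal configuration trail. -/
def IsTotalLegalTrailD (G : SGraph V) (w0 : V → V → ℕ) (b : Burst V)
    (t : TrailData V b.m) : Prop :=
  IsTotalLegalTrail G w0 b t.1 t.2

/-- The soliton automaton `A_B(G)` is strongly deterministic: for every state and
burst there is at most one total legal configuration trail. -/
def StronglyDet (G : SGraph V) (w0 : V → V → ℕ) (B : Set (Burst V)) : Prop :=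
  ∀ w', InStates G w0 B w' → ∀ b ∈ B, ∀ t t' : TrailData V b.m,
    IsTotalLegalTrailD G w' b t → IsTotalLegalTrailD G w' b t' → t = t'

/-- The prefix of length `i` of a sequence of configurations. -/
def prefixCfg {α : Type} {len : ℕ} (cfg : Fin (len + 1) → α) (i : ℕ) (h : i ≤ len) :
    Fin (i + 1) → α := fun j => cfg ⟨j, by have := j.isLt; omega⟩

/-- `SC(C)`: the set of position maps by which the configuration trail `C` can be
extended by one configuration. -/
def SC (G : SGraph V) (w0 : V → V → ℕ) (b : Burst V) (len : ℕ)
    (cfg : Fin (len + 1) → Config V b.m) : Set (Fin b.m → SolPos V) :=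
  {π' | ∃ wn : V → V → ℕ, IsTrail G w0 b (len + 1) (Fin.snoc cfg (wn, π'))}

/-- A configuration trail is perfect if no two of its configurations at distinct
positions are successor-equivalent (equal as configurations with equal sets of
possible successor position maps). -/
def IsPerfect (G : SGraph V) (w0 : V → V → ℕ) (b : Burst V) (len : ℕ)
    (cfg : Fin (len + 1) → Config V b.m) : Prop :=
  ∀ (i j : ℕ) (hij : i < j) (hj : j ≤ len),
    ¬(cfg ⟨i, by omega⟩ = cfg ⟨j, by omega⟩ ∧
      SC G w0 b i (prefixCfg cfg i (by omega)) = SC G w0 b j (prefixCfg cfg j hj))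

/-- The trail data is a perfect configuration trail. -/
def IsPerfectD (G : SGraph V) (w0 : V → V → ℕ) (b : Burst V)
    (t : TrailData V b.m) : Prop :=
  IsPerfect G w0 b t.1 t.2

/-- The soliton automaton `A_B(G)` is perfectly deterministic: for every state and
burst there is at most one perfect total legal configuration trail. -/
def PerfectlyDet (G : SGraph V) (w0 : V → V → ℕ) (B : Set (Burst V)) : Prop :=
  ∀ w', InStates G w0 B w' → ∀ b ∈ B, ∀ t t' : TrailData V b.m,
    IsTotalLegalTrailD G w' b t → IsPerfectD G w' b t →
    IsTotalLegalTrailD G w' b t' → IsPerfectD G w' b t' → t = t'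

/-- `g` is an upper bound on the amount of non-determinism of `A_B(G)`. -/
def DegreeBound (G : SGraph V) (w0 : V → V → ℕ) (B : Set (Burst V)) (g : ℕ) : Prop :=
  ∀ w', InStates G w0 B w' → ∀ b ∈ B, (ResultSet G w' b).ncard ≤ g

/-- The degree of non-determinism of `A_B(G)` is `g`: the smallest integer `g ≥ 1`
with `|Result(G', b)| ≤ g` for all states `G'` and bursts `b ∈ B`. -/
def HasDegreeOfNondeterminism (G : SGraph V) (w0 : V → V → ℕ) (B : Set (Burst V))
    (g : ℕ) : Prop :=
  1 ≤ g ∧ DegreeBound G w0 B g ∧ ∀ g', 1 ≤ g' → DegreeBound G w0 B g' → g ≤ g'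

/-- The edge `(u, v)` is used (in this direction) in the configuration trail `cfg`. -/
def UsedInTrail {m : ℕ} (len : ℕ) (cfg : Fin (len + 1) → Config V m) (u v : V) : Prop :=
  ∃ (j : ℕ) (h : j < len) (i : Fin m),
    (cfg ⟨j, by omega⟩).2 i = SolPos.node u ∧ (cfg ⟨j + 1, by omega⟩).2 i = SolPos.node v

/-- An indecomposable soliton graph: it contains no impervious path, i.e. every
edge is used in some configuration trail of some state reachable with some set
of bursts. -/
def Indecomposable (G : SGraph V) (w0 : V → V → ℕ) : Prop :=
  ∀ u v, G.adj u v →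
    ∃ B : Set (Burst V), (∀ b ∈ B, IsBurstFor G b) ∧
      ∃ w', InStates G w0 B w' ∧ ∃ b ∈ B, ∃ (len : ℕ) (cfg : Fin (len + 1) → Config V b.m),
        IsTrail G w' b len cfg ∧ (UsedInTrail len cfg u v ∨ UsedInTrail len cfg v u)

/-- Walks of a given length in a graph. -/
inductive WalkLen (G : SGraph V) : V → V → ℕ → Prop
  | refl (v : V) : WalkLen G v v 0
  | tail {u v x : V} {n : ℕ} : WalkLen G u v n → G.adj v x → WalkLen G u x (n + 1)

/-- The graph is connected. -/
def ConnectedG (G : SGraph V) : Prop := ∀ u v, Relation.ReflTransGen G.adj u v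

/-- The edge `(u, v)` is a bridge: removing it disconnects `u` from `v`. -/
def IsBridge (G : SGraph V) (u v : V) : Prop :=
  ¬ Relation.ReflTransGen (fun a c => G.adj a c ∧ ¬((a = u ∧ c = v) ∨ (a = v ∧ c = u))) u v

/-- The underlying graph is a tree: connected and every edge is a bridge. -/
def IsTreeG (G : SGraph V) : Prop := ConnectedG G ∧ ∀ u v, G.adj u v → IsBridge G u v

/-- `(u, v)` is an edge of the cycle `cyc`. -/
def CycleEdge {L : ℕ} (cyc : ZMod (2 * L) → V) (u v : V) : Prop :=
  ∃ t, (u = cyc t ∧ v = cyc (t + 1)) ∨ (v = cyc t ∧ u = cyc (t + 1))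

/-- The distance from a node to the cycle. -/
noncomputable def distToCycle (G : SGraph V) {L : ℕ} (cyc : ZMod (2 * L) → V)
    (n : V) : ℕ :=
  sInf {d | ∃ t, WalkLen G n (cyc t) d}

/-- A chestnut with distinguished cycle `cyc` of even length `2L`: an
indecomposable soliton graph consisting of a single cycle of even length
together with paths leading into it, such that entry points of different paths
(nodes of degree 3 on the cycle) are at even distance along the cycle, and paths
leading to the cycle meet (at nodes of degree 3 off the cycle) only at even
distance from their entry into the cycle. -/
def IsChestnutWith (G : SGraph V) (w : V → V → ℕ) (L : ℕ)
    (cyc : ZMod (2 * L) → V) : Prop :=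
  IsSolitonGraph G w ∧ Indecomposable G w ∧ 2 ≤ L ∧
  Function.Injective cyc ∧ (∀ t, G.adj (cyc t) (cyc (t + 1))) ∧ ConnectedG G ∧
  (∀ u v, G.adj u v → ¬ CycleEdge cyc u v → IsBridge G u v) ∧
  (∀ s t : ZMod (2 * L), degree G (cyc s) = 3 → degree G (cyc t) = 3 →
    ∃ d, t = s + 2 * d) ∧
  (∀ n, (∀ t, n ≠ cyc t) → degree G n = 3 → Even (distToCycle G cyc n))

/-- A chestnut. -/
def IsChestnut (G : SGraph V) (w : V → V → ℕ) : Prop :=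
  ∃ (L : ℕ) (cyc : ZMod (2 * L) → V), IsChestnutWith G w L cyc

/-- The burst `(x, y)⊥` of length 1. -/
def singleBurst (x y : V) : Burst V :=
  { m := 1, hm := one_pos, entry := fun _ => x, exit := fun _ => y,
    delay := fun _ => 0, delay_zero := rfl }

/-- The burst `(e, e)‖₁(e, e)⊥` of length 2: two solitons enter and exit at `e`,
the second entering one time step after the first. -/
def doubleBurst (e : V) : Burst V :=
  { m := 2, hm := two_pos, entry := fun _ => e, exit := fun _ => e,
    delay := fun i => if (i : ℕ) = 0 then 0 else 1, delay_zero := rfl }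


/-!
The witness is the chestnut: a 4-cycle `1 - 2 - 3 - 4 - 1` with a pendant edge from the
exterior node `0`, weighted by `w₀`, together with the single burst `(0, 0)‖₁(0, 0)⊥`.
From `w₀` the two solitons are forced into a lasso: after two steps they reach a configuration
from which the only way on is a loop of four configurations through the cycle, which may be
repeated any number `k ≥ 1` of times before both solitons leave; every such trail ends in `w₁`.
So there are several total legal trails (`k = 1, 2`), and the automaton is not strongly
deterministic. But the set of successors of a trail depends only on its last two configurations,
so a perfect trail never repeats a pair of consecutive configurations, and a second pass
through the loop would; hence the trail with `k = 1` is the only perfect one. The reflection of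
the cycle fixing `0` and `1` is a graph automorphism exchanging `w₀` and `w₁`, and automorphisms
fixing the burst's terminals map total legal trails to total legal trails, so the same holds from
`w₁`, and `States = {w₀, w₁}`.
-/

section Trails

variable {G : SGraph V} {w : V → V → ℕ} {b : Burst V} {len : ℕ}
  {cfg : Fin (len + 1) → Config V b.m}

def ValidFirst (G : SGraph V) (b : Burst V) (c c' : Config V b.m) : Prop :=
  StepOk G b c c' ∧ LegalStep G c c' ∧ ∀ i n, c.2 i = .node n → ∃ n', c'.2 i = .node n'

def ValidNext (G : SGraph V) (b : Burst V) (c c' c'' : Config V b.m) : Prop :=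
  StepOk G b c' c'' ∧ TwoStepOk G b c c' c'' ∧ LegalStep G c' c''

namespace IsTotalLegalTrail

theorem not_isFinal_of_lt (h : IsTotalLegalTrail G w b len cfg) {j : ℕ} (hj : j < len) :
    ¬ IsFinal (cfg ⟨j, by omega⟩).2 :=
  h.1.1.2.2.2.2.2 j hj

theorem lt_of_not_isFinal (h : IsTotalLegalTrail G w b len cfg) {j : ℕ} (hj : j ≤ len)
    (hnf : ¬ IsFinal (cfg ⟨j, by omega⟩).2) : j < len := by
  refine lt_of_le_of_ne hj fun hjl => hnf ?_
  subst hjl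
  exact h.2

theorem validFirst (h : IsTotalLegalTrail G w b len cfg) (hinit : ¬ IsFinal (initPos b)) :
    ∃ h1 : 1 ≤ len, cfg 0 = (w, initPos b) ∧
      ValidFirst G b (w, initPos b) (cfg ⟨1, by omega⟩) := by
  have hc0 : cfg 0 = (w, initPos b) := Prod.ext h.1.1.1 h.1.1.2.1
  have h1 : 1 ≤ len := h.lt_of_not_isFinal (j := 0) (Nat.zero_le _) (hc0 ▸ hinit)
  obtain ⟨⟨⟨-, -, hstep, hmove, -, -⟩, hlegal⟩, -⟩ := h
  exact ⟨h1, hc0, hc0 ▸ ⟨hstep 0 h1, hlegal 0 h1, hmove h1⟩⟩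

theorem validNext (h : IsTotalLegalTrail G w b len cfg) {j : ℕ} (hj : j + 1 ≤ len)
    (hnf : ¬ IsFinal (cfg ⟨j + 1, by omega⟩).2) :
    ∃ h2 : j + 2 ≤ len, ValidNext G b (cfg ⟨j, by omega⟩) (cfg ⟨j + 1, by omega⟩)
      (cfg ⟨j + 2, by omega⟩) := by
  have h2 : j + 2 ≤ len := h.lt_of_not_isFinal hj hnf
  obtain ⟨⟨⟨-, -, hstep, -, htwo, -⟩, hlegal⟩, -⟩ := h
  exact ⟨h2, hstep (j + 1) h2, htwo j h2, hlegal (j + 1) h2⟩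

theorem exists_last_mem_of_invariant (h : IsTotalLegalTrail G w b len cfg)
    (S : Set (Config V b.m × Config V b.m)) (hinit : ¬ IsFinal (initPos b))
    (hfirst : ∀ c, ValidFirst G b (w, initPos b) c → ((w, initPos b), c) ∈ S)
    (hnext : ∀ p ∈ S, ¬ IsFinal p.2.2 → ∀ c, ValidNext G b p.1 p.2 c → (p.2, c) ∈ S) :
    ∃ c, (c, cfg (Fin.last len)) ∈ S := by
  obtain ⟨h1, hc0, hvalid⟩ := h.validFirst hinit
  have hpairs : ∀ j (hj : j + 1 ≤ len), (cfg ⟨j, by omega⟩, cfg ⟨j + 1, by omega⟩) ∈ S := by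
    intro j
    induction j with
    | zero => intro; exact hc0 ▸ hfirst _ hvalid
    | succ j ih =>
      intro hj
      have hnf := h.not_isFinal_of_lt hj
      exact hnext _ (ih (by omega)) hnf _ (h.validNext (by omega) hnf).2
  obtain ⟨k, rfl⟩ : ∃ k, len = k + 1 := ⟨len - 1, by omega⟩
  exact ⟨_, hpairs k le_rfl⟩

end IsTotalLegalTrail

end Trails

section SuccessorSets

variable {G : SGraph V} {w : V → V → ℕ} {b : Burst V} {len : ℕ}

theorem Fin.snoc_mk {α : Type*} {n : ℕ} (f : Fin (n + 1) → α) (x : α) (j : ℕ) (h : j < n + 2) :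
    (Fin.snoc f x : Fin (n + 2) → α) ⟨j, h⟩ = if h' : j < n + 1 then f ⟨j, h'⟩ else x := by
  simp [Fin.snoc]

theorem isTrail_snoc_iff {cfg : Fin (len + 2) → Config V b.m}
    (ht : IsTrail G w b (len + 1) cfg) (x : Config V b.m) :
    IsTrail G w b (len + 2) (Fin.snoc cfg x) ↔
      StepOk G b (cfg ⟨len + 1, by omega⟩) x ∧
      TwoStepOk G b (cfg ⟨len, by omega⟩) (cfg ⟨len + 1, by omega⟩) x ∧
      ¬ IsFinal (cfg ⟨len + 1, by omega⟩).2 := by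
  obtain ⟨h0w, h0π, hstep, hmove, htwo, hnf⟩ := ht
  have e0 : (Fin.snoc cfg x : Fin (len + 3) → _) 0 = cfg 0 := Fin.snoc_mk cfg x 0 _
  simp only [IsTrail, e0, Fin.snoc_mk]
  constructor
  · rintro ⟨-, -, hstep', -, htwo', hnf'⟩
    refine ⟨?_, ?_, ?_⟩
    · simpa using hstep' (len + 1) (by omega)
    · simpa using htwo' len (by omega)
    · simpa using hnf' (len + 1) (by omega)
  · rintro ⟨hs, htw, hn⟩
    refine ⟨h0w, h0π, fun j hj => ?_, fun _ => hmove (by omega), fun j hj => ?_, fun j hj => ?_⟩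
    · split_ifs
      · exact hstep j (by omega)
      · obtain rfl : j = len + 1 := by omega
        exact hs
      all_goals omega
    · split_ifs
      · exact htwo j (by omega)
      · obtain rfl : j = len := by omega
        exact htw
      all_goals omega
    · rw [dif_pos (by omega)]
      rcases Nat.lt_or_ge j (len + 1) with h1 | h1
      · exact hnf j h1
      · obtain rfl : j = len + 1 := by omega
        exact hn

theorem SC_eq_of_last_two_eq {len' : ℕ} {cfg : Fin (len + 2) → Config V b.m}
    {cfg' : Fin (len' + 2) → Config V b.m}
    (ht : IsTrail G w b (len + 1) cfg) (ht' : IsTrail G w b (len' + 1) cfg')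
    (e₁ : cfg ⟨len, by omega⟩ = cfg' ⟨len', by omega⟩)
    (e₂ : cfg ⟨len + 1, by omega⟩ = cfg' ⟨len' + 1, by omega⟩) :
    SC G w b (len + 1) cfg = SC G w b (len' + 1) cfg' := by
  ext π'
  simp only [SC, Set.mem_ofPred_eq, isTrail_snoc_iff ht, isTrail_snoc_iff ht', e₁, e₂]

theorem IsTrail.prefix {cfg : Fin (len + 1) → Config V b.m} (ht : IsTrail G w b len cfg)
    (i : ℕ) (hi : i ≤ len) : IsTrail G w b i (prefixCfg cfg i hi) := by
  obtain ⟨h0w, h0π, hstep, hmove, htwo, hnf⟩ := ht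
  exact ⟨h0w, h0π, fun j hj => hstep j (by omega), fun h => hmove (by omega),
    fun j hj => htwo j (by omega), fun j hj => hnf j (by omega)⟩

theorem IsPerfect.injective_steps {cfg : Fin (len + 1) → Config V b.m}
    (ht : IsTrail G w b len cfg) (hp : IsPerfect G w b len cfg) :
    Function.Injective fun j : Fin len => (cfg j.castSucc, cfg j.succ) := by
  have ne_of_lt : ∀ i j : Fin len, i < j →
      (cfg i.castSucc, cfg i.succ) ≠ (cfg j.castSucc, cfg j.succ) := by
    rintro ⟨i, hi⟩ ⟨j, hj⟩ (hij : i < j) heq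
    obtain ⟨e₁, e₂⟩ := Prod.mk.inj heq
    exact hp (i + 1) (j + 1) (by omega) hj
      ⟨e₂, SC_eq_of_last_two_eq (ht.prefix _ _) (ht.prefix _ _) e₁ e₂⟩
  intro i j heq
  by_contra hne
  rcases lt_or_gt_of_ne hne with h | h
  exacts [ne_of_lt i j h heq, ne_of_lt j i h heq.symm]

end SuccessorSets

section Automorphism

def IsAutomorphism (G : SGraph V) (σ : V ≃ V) : Prop :=
  ∀ u v, G.adj (σ u) (σ v) ↔ G.adj u v

def FixesTerminals (σ : V ≃ V) (b : Burst V) : Prop :=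
  ∀ i, σ (b.entry i) = b.entry i ∧ σ (b.exit i) = b.exit i

def SolPos.map (f : V → V) : SolPos V → SolPos V
  | .wait k => .wait k
  | .node n => .node (f n)

def mapWeights (σ : V ≃ V) (w : V → V → ℕ) : V → V → ℕ := fun u v => w (σ.symm u) (σ.symm v)

def mapConfig {m : ℕ} (σ : V ≃ V) (c : Config V m) : Config V m :=
  (mapWeights σ c.1, fun i => (c.2 i).map σ)

variable {G : SGraph V} {b : Burst V} {σ : V ≃ V} {m : ℕ}

namespace SolPos

@[simp]
theorem map_eq_node_iff {p : SolPos V} {n : V} : p.map σ = .node n ↔ p = .node (σ.symm n) := by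
  cases p <;> simp [map, Equiv.eq_symm_apply]

@[simp]
theorem map_eq_wait_iff {p : SolPos V} {k : ℕ} : p.map σ = .wait k ↔ p = .wait k := by
  cases p <;> simp [map]

theorem map_injective : Function.Injective (SolPos.map σ) := by
  intro p q h
  cases p <;> cases q <;> simp_all [map]

end SolPos

theorem IsAutomorphism.degree_apply (hσ : IsAutomorphism G σ) (n : V) :
    degree G (σ n) = degree G n :=
  (Nat.card_congr (σ.subtypeEquiv fun v => (hσ n v).symm)).symm

theorem IsAutomorphism.symm (hσ : IsAutomorphism G σ) : IsAutomorphism G σ.symm := fun u v => by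
  simpa using (hσ (σ.symm u) (σ.symm v)).symm

theorem IsAutomorphism.exterior_symm_apply (hσ : IsAutomorphism G σ) {n : V} :
    Exterior G (σ.symm n) ↔ Exterior G n := by
  simp only [Exterior, hσ.symm.degree_apply]

theorem IsAutomorphism.interior_symm_apply (hσ : IsAutomorphism G σ) {n : V} :
    Interior G (σ.symm n) ↔ Interior G n := by
  simp only [Interior, hσ.symm.degree_apply]

theorem FixesTerminals.symm_exit (hb : FixesTerminals σ b) (i : Fin b.m) :
    σ.symm (b.exit i) = b.exit i :=
  σ.symm_apply_eq.2 (hb i).2.symm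

theorem FixesTerminals.map_initPos (hb : FixesTerminals σ b) (i : Fin b.m) :
    (initPos b i).map σ = initPos b i := by
  unfold initPos
  split_ifs <;> simp [SolPos.map, (hb i).1]

theorem PosStep.map (hσ : IsAutomorphism G σ) (hb : FixesTerminals σ b) {i : Fin b.m}
    {p p' : SolPos V} (h : PosStep G b i p p') : PosStep G b i (p.map σ) (p'.map σ) := by
  rcases h with ⟨rfl, rfl⟩ | ⟨rfl, rfl⟩ | ⟨k, rfl, rfl⟩ | ⟨n, rfl, ⟨rfl, rfl⟩ | ⟨n', hadj, rfl⟩⟩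
  · exact Or.inl ⟨rfl, rfl⟩
  · exact Or.inr (Or.inl ⟨rfl, by simp [SolPos.map, (hb i).1]⟩)
  · exact Or.inr (Or.inr (Or.inl ⟨k, rfl, rfl⟩))
  · exact Or.inr (Or.inr (Or.inr ⟨_, rfl, Or.inl ⟨(hb i).2, rfl⟩⟩))
  · exact Or.inr (Or.inr (Or.inr ⟨_, rfl, Or.inr ⟨_, (hσ n n').2 hadj, rfl⟩⟩))

theorem movesAlong_map_iff {π π' : Fin m → SolPos V} {p q : V} :
    MovesAlong (fun i => (π i).map σ) (fun i => (π' i).map σ) p q ↔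
      MovesAlong π π' (σ.symm p) (σ.symm q) := by
  simp [MovesAlong]

theorem WeightStep.map {w w' : V → V → ℕ} {π π' : Fin m → SolPos V}
    (h : WeightStep w w' π π') :
    WeightStep (mapWeights σ w) (mapWeights σ w') (fun i => (π i).map σ)
      (fun i => (π' i).map σ) := fun p q => by
  simp only [movesAlong_map_iff]
  exact h (σ.symm p) (σ.symm q)

theorem StepOk.map (hσ : IsAutomorphism G σ) (hb : FixesTerminals σ b) {c c' : Config V b.m}
    (h : StepOk G b c c') : StepOk G b (mapConfig σ c) (mapConfig σ c') :=
  ⟨fun i => (h.1 i).map hσ hb, h.2.map⟩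

theorem TwoStepOk.map (hσ : IsAutomorphism G σ) (hb : FixesTerminals σ b)
    {c c' c'' : Config V b.m} (h : TwoStepOk G b c c' c'') :
    TwoStepOk G b (mapConfig σ c) (mapConfig σ c') (mapConfig σ c'') := by
  intro i
  obtain ⟨hentry, hexit, halt, hback⟩ := h i
  simp only [mapConfig, SolPos.map_eq_node_iff, SolPos.map_eq_wait_iff, ne_eq,
    SolPos.map_injective.eq_iff, hb.symm_exit]
  refine ⟨fun n hn hext hw => ?_, fun hn hext ⟨p, hp⟩ => hexit hn hext ⟨_, hp⟩,
    fun p q r hp hq hint hr => halt _ _ _ hp hq (hσ.interior_symm_apply.2 hint) hr, hback⟩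
  obtain ⟨r, hr⟩ := hentry _ hn (hσ.exterior_symm_apply.2 hext) hw
  exact ⟨σ r, by simp [hr]⟩

theorem LegalStep.map (hσ : IsAutomorphism G σ) {c c' : Config V m} (h : LegalStep G c c') :
    LegalStep G (mapConfig σ c) (mapConfig σ c') := by
  simp only [LegalStep, mapConfig, SolPos.map_eq_node_iff, ne_eq, SolPos.map_injective.eq_iff]
  exact ⟨fun i i' hne n => h.1 i i' hne _,
    fun i i' hne p q hp hq hadj => h.2 i i' hne _ _ hp hq ((hσ.symm p q).2 hadj)⟩

theorem isFinal_map {π : Fin m → SolPos V} : IsFinal (fun i => (π i).map σ) ↔ IsFinal π := by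
  simp [IsFinal]

theorem IsTotalLegalTrail.map (hσ : IsAutomorphism G σ) (hb : FixesTerminals σ b)
    {w : V → V → ℕ} {len : ℕ} {cfg : Fin (len + 1) → Config V b.m}
    (h : IsTotalLegalTrail G w b len cfg) :
    IsTotalLegalTrail G (mapWeights σ w) b len (mapConfig σ ∘ cfg) := by
  obtain ⟨⟨⟨h0w, h0π, hstep, hmove, htwo, hnf⟩, hlegal⟩, hfinal⟩ := h
  refine ⟨⟨⟨by simp [mapConfig, h0w], funext fun i => by simp [mapConfig, h0π, hb.map_initPos],
    fun j hj => (hstep j hj).map hσ hb, fun h1 i n hn => ?_, fun j hj => (htwo j hj).map hσ hb,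
    fun j hj => by simpa [mapConfig, isFinal_map] using hnf j hj⟩,
    fun j hj => (hlegal j hj).map hσ⟩, by simpa [mapConfig, isFinal_map] using hfinal⟩
  obtain ⟨n', hn'⟩ := hmove h1 i _ (by simpa [mapConfig] using hn)
  exact ⟨σ n', by simp [mapConfig, hn']⟩

theorem SolPos.map_symm_map (p : SolPos V) : (p.map σ).map σ.symm = p := by
  cases p <;> simp [SolPos.map]

theorem mapWeights_symm_mapWeights (w : V → V → ℕ) :
    mapWeights σ.symm (mapWeights σ w) = w := by
  funext u v
  simp [mapWeights]

theorem mapConfig_symm_mapConfig (c : Config V m) : mapConfig σ.symm (mapConfig σ c) = c :=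
  Prod.ext (mapWeights_symm_mapWeights c.1) (funext fun i => (c.2 i).map_symm_map)

theorem mapConfig_injective : Function.Injective (mapConfig (m := m) σ) :=
  Function.LeftInverse.injective mapConfig_symm_mapConfig

def TrailData.map (σ : V ≃ V) (t : TrailData V m) : TrailData V m := ⟨t.1, mapConfig σ ∘ t.2⟩

theorem TrailData.map_symm_map (t : TrailData V m) : (t.map σ).map σ.symm = t := by
  obtain ⟨len, cfg⟩ := t
  change (⟨len, mapConfig σ.symm ∘ mapConfig σ ∘ cfg⟩ : TrailData V m) = ⟨len, cfg⟩
  simp only [mapConfig_symm_mapConfig, Function.comp_def]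

theorem TrailData.map_injective : Function.Injective (TrailData.map (m := m) σ) :=
  Function.LeftInverse.injective TrailData.map_symm_map

end Automorphism

section Successors

variable [DecidableEq V]

instance : DecidableEq (SolPos V)
  | .wait m, .wait n => decidable_of_iff (m = n) (by simp)
  | .node x, .node y => decidable_of_iff (x = y) (by simp)
  | .wait _, .node _ => isFalse (by simp)
  | .node _, .wait _ => isFalse (by simp)

instance {m : ℕ} (π π' : Fin m → SolPos V) (p q : V) : Decidable (MovesAlong π π' p q) := by
  unfold MovesAlong; infer_instance

instance {m : ℕ} (π : Fin m → SolPos V) : Decidable (IsFinal π) := by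
  unfold IsFinal; infer_instance

def flipWeights {m : ℕ} (w : V → V → ℕ) (π π' : Fin m → SolPos V) : V → V → ℕ :=
  fun p q => if MovesAlong π π' p q ∨ MovesAlong π π' q p then 3 - w p q else w p q

theorem WeightStep.eq_flipWeights {m : ℕ} {w w' : V → V → ℕ} {π π' : Fin m → SolPos V}
    (h : WeightStep w w' π π') : w' = flipWeights w π π' := by
  funext p q
  unfold flipWeights
  split_ifs with hmv
  exacts [(h p q).1 hmv, (h p q).2 hmv]

variable [Fintype V] {G : SGraph V} [DecidableRel G.adj] {b : Burst V}

def nextPositions (G : SGraph V) [DecidableRel G.adj] (b : Burst V) (i : Fin b.m) :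
    SolPos V → Finset (SolPos V)
  | .wait 0 => {.wait 0}
  | .wait 1 => {.node (b.entry i)}
  | .wait (k + 2) => {.wait (k + 1)}
  | .node n => (if n = b.exit i then {.wait 0} else ∅) ∪ (Finset.univ.filter (G.adj n)).image .node

theorem posStep_iff_mem_nextPositions {i : Fin b.m} {p p' : SolPos V} :
    PosStep G b i p p' ↔ p' ∈ nextPositions G b i p := by
  match p with
  | .wait 0 => simp [nextPositions, PosStep]
  | .wait 1 => simp [nextPositions, PosStep]
  | .wait (k + 2) => simp [nextPositions, PosStep]
  | .node n => by_cases hn : n = b.exit i <;> simp [nextPositions, PosStep, hn, eq_comm]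

instance (i : Fin b.m) (p p' : SolPos V) : Decidable (PosStep G b i p p') :=
  decidable_of_iff _ posStep_iff_mem_nextPositions.symm

instance {m : ℕ} (w w' : V → V → ℕ) (π π' : Fin m → SolPos V) :
    Decidable (WeightStep w w' π π') := by
  unfold WeightStep; infer_instance

instance (c c' : Config V b.m) : Decidable (StepOk G b c c') := by
  unfold StepOk; infer_instance

set_option synthInstance.maxSize 1024 in
instance {m : ℕ} (c c' : Config V m) : Decidable (LegalStep G c c') := by
  unfold LegalStep; infer_instance

def candidateSteps (G : SGraph V) [DecidableRel G.adj] (b : Burst V) (c : Config V b.m) :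
    Finset (Config V b.m) :=
  (Fintype.piFinset fun i => nextPositions G b i (c.2 i)).image
    fun π => (flipWeights c.1 c.2 π, π)

theorem StepOk.mem_candidateSteps {c c' : Config V b.m} (h : StepOk G b c c') :
    c' ∈ candidateSteps G b c := by
  obtain ⟨w', π'⟩ := c'
  obtain ⟨hpos, hweight⟩ := h
  simp only [candidateSteps, Finset.mem_image, Fintype.mem_piFinset]
  exact ⟨π', fun i => posStep_iff_mem_nextPositions.1 (hpos i),
    (congrArg (·, π') hweight.eq_flipWeights).symm⟩

variable [DecidablePred (Exterior G)] [DecidablePred (Interior G)]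

set_option synthInstance.maxSize 1024 in
instance (c c' c'' : Config V b.m) : Decidable (TwoStepOk G b c c' c'') := by
  unfold TwoStepOk; infer_instance

instance (c c' c'' : Config V b.m) : Decidable (ValidNext G b c c' c'') := by
  unfold ValidNext; infer_instance

instance (c c' : Config V b.m) : Decidable (ValidFirst G b c c') := by
  unfold ValidFirst; infer_instance

instance (len : ℕ) (P : ∀ j : ℕ, j + 2 ≤ len → Prop) [∀ j h, Decidable (P j h)] :
    Decidable (∀ j h, P j h) :=
  decidable_of_iff (∀ (j : ℕ) (h : j < len) (h2 : j + 2 ≤ len), P j h2)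
    ⟨fun H j h2 => H j (by omega) h2, fun H j _ h2 => H j h2⟩

instance (w : V → V → ℕ) (len : ℕ) (cfg : Fin (len + 1) → Config V b.m) :
    Decidable (IsTotalLegalTrail G w b len cfg) := by
  unfold IsTotalLegalTrail IsLegalTrail IsTrail; infer_instance

def firstSuccessors (G : SGraph V) [DecidableRel G.adj] [DecidablePred (Exterior G)]
    [DecidablePred (Interior G)] (b : Burst V) (c : Config V b.m) : Finset (Config V b.m) :=
  (candidateSteps G b c).filter (ValidFirst G b c)

def successors (G : SGraph V) [DecidableRel G.adj] [DecidablePred (Exterior G)]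
    [DecidablePred (Interior G)] (b : Burst V) (c c' : Config V b.m) : Finset (Config V b.m) :=
  (candidateSteps G b c').filter (ValidNext G b c c')

theorem ValidFirst.mem_firstSuccessors {c c' : Config V b.m} (h : ValidFirst G b c c') :
    c' ∈ firstSuccessors G b c :=
  Finset.mem_filter.2 ⟨h.1.mem_candidateSteps, h⟩

theorem ValidNext.mem_successors {c c' c'' : Config V b.m} (h : ValidNext G b c c' c'') :
    c'' ∈ successors G b c c' :=
  Finset.mem_filter.2 ⟨h.1.mem_candidateSteps, h⟩

end Successors

section TrailSuccessors

variable [DecidableEq V] [Fintype V] {G : SGraph V} [DecidableRel G.adj]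
  [DecidablePred (Exterior G)] [DecidablePred (Interior G)] {w : V → V → ℕ} {b : Burst V}
  {len : ℕ} {cfg : Fin (len + 1) → Config V b.m}

theorem IsTotalLegalTrail.mem_firstSuccessors (h : IsTotalLegalTrail G w b len cfg)
    (hinit : ¬ IsFinal (initPos b)) :
    ∃ h1 : 1 ≤ len, cfg 0 = (w, initPos b) ∧
      cfg ⟨1, by omega⟩ ∈ firstSuccessors G b (w, initPos b) :=
  let ⟨h1, hc0, hvalid⟩ := h.validFirst hinit
  ⟨h1, hc0, hvalid.mem_firstSuccessors⟩

theorem IsTotalLegalTrail.mem_successors (h : IsTotalLegalTrail G w b len cfg) {j : ℕ}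
    (hj : j + 1 ≤ len) {X Y : Config V b.m} (hX : cfg ⟨j, by omega⟩ = X)
    (hY : cfg ⟨j + 1, by omega⟩ = Y) (hnf : ¬ IsFinal Y.2) :
    ∃ h2 : j + 2 ≤ len, cfg ⟨j + 2, by omega⟩ ∈ successors G b X Y := by
  obtain ⟨h2, hvalid⟩ := h.validNext hj (hY ▸ hnf)
  exact ⟨h2, hX ▸ hY ▸ hvalid.mem_successors⟩

theorem IsTotalLegalTrail.next_eq (h : IsTotalLegalTrail G w b len cfg) {j : ℕ}
    (hj : j + 1 ≤ len) {X Y Z : Config V b.m} (hX : cfg ⟨j, by omega⟩ = X)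
    (hY : cfg ⟨j + 1, by omega⟩ = Y) (hZ : ¬ IsFinal Y.2 ∧ successors G b X Y = {Z}) :
    ∃ h2 : j + 2 ≤ len, cfg ⟨j + 2, by omega⟩ = Z := by
  obtain ⟨h2, hmem⟩ := h.mem_successors hj hX hY hZ.1
  exact ⟨h2, Finset.mem_singleton.1 (hZ.2 ▸ hmem)⟩

end TrailSuccessors

section Chestnut

def chestnutEdges : List (Fin 5 × Fin 5) := [(0, 1), (1, 2), (2, 3), (3, 4), (4, 1)]

def chestnut : SGraph (Fin 5) where
  adj u v := (u, v) ∈ chestnutEdges ∨ (v, u) ∈ chestnutEdges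
  symm _ _ := Or.symm
  loopless := by decide

instance : DecidableRel chestnut.adj := fun u v => by unfold chestnut; infer_instance

theorem chestnut_degree (n : Fin 5) :
    degree chestnut n = if n = 0 then 1 else if n = 1 then 3 else 2 := by
  rw [degree, Nat.card_eq_fintype_card, Fintype.card_subtype]
  fin_cases n <;> decide

theorem chestnut_exterior_iff {n : Fin 5} : Exterior chestnut n ↔ n = 0 := by
  rw [Exterior, chestnut_degree]; split_ifs <;> simp_all

theorem chestnut_interior_iff {n : Fin 5} : Interior chestnut n ↔ n ≠ 0 := by
  rw [Interior, chestnut_degree]; split_ifs <;> simp_all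

instance : DecidablePred (Exterior chestnut) := fun _ =>
  decidable_of_iff _ chestnut_exterior_iff.symm

instance : DecidablePred (Interior chestnut) := fun _ =>
  decidable_of_iff _ chestnut_interior_iff.symm

/-- The weighting with weights `a, b, c, d, e` on the edges listed in `chestnutEdges`. -/
def weights (a b c d e : ℕ) : Fin 5 → Fin 5 → ℕ :=
  ![![0, a, 0, 0, 0],
    ![a, 0, b, 0, e],
    ![0, b, 0, c, 0],
    ![0, 0, c, 0, d],
    ![0, e, 0, d, 0]]

def w₀ : Fin 5 → Fin 5 → ℕ := weights 1 1 2 1 2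

def w₁ : Fin 5 → Fin 5 → ℕ := weights 1 2 1 2 1

theorem isSolitonGraph_chestnut : IsSolitonGraph chestnut w₀ := by
  have hweight : ∀ n, nodeWeight w₀ n = ∑ v, w₀ n v := fun n => finsum_eq_sum_of_fintype _
  refine ⟨⟨by decide, by decide, by decide⟩, fun n => ?_, fun n hn => ?_, fun n hn => ?_,
    fun n => ⟨0, chestnut_exterior_iff.2 rfl, ?_⟩⟩
  · rw [chestnut_degree]; split_ifs <;> simp
  · rw [chestnut_exterior_iff.1 hn, hweight]; decide
  · rw [hweight, chestnut_degree]
    fin_cases n <;> simp_all [chestnut_interior_iff] <;> decide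
  · have h1 : Relation.ReflTransGen chestnut.adj 1 0 := .single (by decide)
    have h2 : Relation.ReflTransGen chestnut.adj 2 0 := .head (by decide) h1
    fin_cases n
    exacts [.refl, h1, h2, .head (by decide) h2, .head (by decide) h1]

def burst : Burst (Fin 5) := doubleBurst 0

def mirror : Fin 5 ≃ Fin 5 := Equiv.swap 2 4

theorem isAutomorphism_mirror : IsAutomorphism chestnut mirror := by
  unfold IsAutomorphism; decide

theorem fixesTerminals_mirror : FixesTerminals mirror burst := by
  unfold FixesTerminals; decide

theorem mapWeights_mirror_w₁ : mapWeights mirror w₁ = w₀ := by decide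

end Chestnut

section TrailsFromW₀

variable {len : ℕ} {cfg : Fin (len + 1) → Config (Fin 5) burst.m}

/-- Soliton 0 runs twice round the cycle and soliton 1 once; configurations 2 and 6 coincide. -/
def trail₀ : Fin 12 → Config (Fin 5) burst.m :=
  ![(weights 1 1 2 1 2, ![.node 0, .wait 1]),
    (weights 2 1 2 1 2, ![.node 1, .node 0]),
    (weights 1 1 2 1 1, ![.node 4, .node 1]),
    (weights 1 1 2 2 2, ![.node 3, .node 4]),
    (weights 1 1 1 1 2, ![.node 2, .node 3]),
    (weights 1 2 2 1 2, ![.node 1, .node 2]),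
    (weights 1 1 2 1 1, ![.node 4, .node 1]),
    (weights 2 1 2 2 1, ![.node 3, .node 0]),
    (weights 2 1 1 2 1, ![.node 2, .wait 0]),
    (weights 2 2 1 2 1, ![.node 1, .wait 0]),
    (weights 1 2 1 2 1, ![.node 0, .wait 0]),
    (weights 1 2 1 2 1, ![.wait 0, .wait 0])]

def deadEnd₀ : Config (Fin 5) burst.m := (weights 1 2 2 2 1, ![.node 3, .node 2])

-- A shortcut instance: without it, `DecidableEq` for pairs of configurations exceeds the
-- default size limit of instance search.
instance : DecidableEq (Config (Fin 5) burst.m) := inferInstance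

def reachablePairs₀ : Finset (Config (Fin 5) burst.m × Config (Fin 5) burst.m) :=
  insert (trail₀ 2, deadEnd₀) (Finset.univ.image fun j : Fin 11 => (trail₀ j.castSucc, trail₀ j.succ))

theorem last_eq_trail₀_last (h : IsTotalLegalTrail chestnut w₀ burst len cfg) :
    cfg (Fin.last len) = trail₀ 11 := by
  have hinit : ¬ IsFinal (initPos burst) := by decide
  have hfirst : ∀ c ∈ firstSuccessors chestnut burst (w₀, initPos burst),
      ((w₀, initPos burst), c) ∈ reachablePairs₀ := by decide
  have hnext : ∀ p ∈ reachablePairs₀, ¬ IsFinal p.2.2 →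
      ∀ c ∈ successors chestnut burst p.1 p.2, (p.2, c) ∈ reachablePairs₀ := by decide
  have hfinal : ∀ p ∈ reachablePairs₀, IsFinal p.2.2 → p.2 = trail₀ 11 := by decide
  obtain ⟨c, hc⟩ := h.exists_last_mem_of_invariant reachablePairs₀ hinit
    (fun c hc => hfirst c hc.mem_firstSuccessors)
    (fun p hp hnf c hc => hnext p hp hnf c hc.mem_successors)
  exact hfinal _ hc h.2

theorem eq_trail₀_of_injective (h : IsTotalLegalTrail chestnut w₀ burst len cfg)
    (hinj : Function.Injective fun j : Fin len => (cfg j.castSucc, cfg j.succ)) :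
    (⟨len, cfg⟩ : TrailData (Fin 5) burst.m) = ⟨11, trail₀⟩ := by
  obtain ⟨h1, hc0, hc1⟩ := h.mem_firstSuccessors (by decide)
  replace hc0 : cfg 0 = trail₀ 0 := hc0.trans (by decide)
  rw [show firstSuccessors chestnut burst (w₀, initPos burst) = {trail₀ 1} by decide,
    Finset.mem_singleton] at hc1
  obtain ⟨h2, hc2⟩ := h.next_eq h1 hc0 hc1 (Z := trail₀ 2) (by decide)
  obtain ⟨h3, hc3⟩ := h.mem_successors h2 hc1 hc2 (by decide)
  rw [show successors chestnut burst (trail₀ 1) (trail₀ 2) = {deadEnd₀, trail₀ 3} by decide,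
    Finset.mem_insert, Finset.mem_singleton] at hc3
  rcases hc3 with hc3 | hc3
  · obtain ⟨_, hc4⟩ := h.mem_successors h3 hc2 hc3 (by decide)
    simp [show successors chestnut burst (trail₀ 2) deadEnd₀ = ∅ by decide] at hc4
  obtain ⟨h4, hc4⟩ := h.next_eq h3 hc2 hc3 (Z := trail₀ 4) (by decide)
  obtain ⟨h5, hc5⟩ := h.next_eq h4 hc3 hc4 (Z := trail₀ 5) (by decide)
  obtain ⟨h6, hc6⟩ := h.next_eq h5 hc4 hc5 (Z := trail₀ 6) (by decide)
  obtain ⟨h7, hc7⟩ := h.mem_successors h6 hc5 hc6 (by decide)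
  rw [show successors chestnut burst (trail₀ 5) (trail₀ 6) = {trail₀ 3, trail₀ 7} by decide,
    Finset.mem_insert, Finset.mem_singleton] at hc7
  rcases hc7 with hc7 | hc7
  -- As `trail₀ 6 = trail₀ 2`, a second loop would repeat the pair at positions 2 and 3.
  · have h26 : (⟨2, by omega⟩ : Fin len) = ⟨6, by omega⟩ :=
      hinj (Prod.ext (hc2.trans (hc6.trans (by decide)).symm) (hc3.trans hc7.symm))
    simp at h26
  obtain ⟨h8, hc8⟩ := h.next_eq h7 hc6 hc7 (Z := trail₀ 8) (by decide)
  obtain ⟨h9, hc9⟩ := h.next_eq h8 hc7 hc8 (Z := trail₀ 9) (by decide)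
  obtain ⟨h10, hc10⟩ := h.next_eq h9 hc8 hc9 (Z := trail₀ 10) (by decide)
  obtain ⟨h11, hc11⟩ := h.next_eq h10 hc9 hc10 (Z := trail₀ 11) (by decide)
  obtain rfl : len = 11 :=
    le_antisymm (not_lt.1 fun hlt => h.not_isFinal_of_lt hlt (hc11 ▸ by decide)) h11
  congr
  funext j
  fin_cases j
  exacts [hc0, hc1, hc2, hc3, hc4, hc5, hc6, hc7, hc8, hc9, hc10, hc11]

end TrailsFromW₀

section ChestnutAutomaton

variable {len : ℕ} {cfg : Fin (len + 1) → Config (Fin 5) burst.m}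

theorem IsTotalLegalTrail.mirror (h : IsTotalLegalTrail chestnut w₁ burst len cfg) :
    IsTotalLegalTrail chestnut w₀ burst len (mapConfig mirror ∘ cfg) :=
  mapWeights_mirror_w₁ ▸ h.map isAutomorphism_mirror fixesTerminals_mirror

theorem resultSet_w₀_subset : ResultSet chestnut w₀ burst ⊆ {w₁} := by
  rintro _ ⟨len, cfg, h, rfl⟩
  rw [last_eq_trail₀_last h]
  decide

theorem resultSet_w₁_subset : ResultSet chestnut w₁ burst ⊆ {w₀} := by
  rintro _ ⟨len, cfg, h, rfl⟩
  have hlast : mapConfig mirror (cfg (Fin.last len)) = trail₀ 11 := last_eq_trail₀_last h.mirror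
  rw [Set.mem_singleton_iff, ← mapWeights_symm_mapWeights (σ := mirror) (cfg _).1]
  exact (congrArg (fun c => mapWeights mirror.symm c.1) hlast).trans
    (show mapWeights mirror.symm (trail₀ 11).1 = w₀ by decide)

theorem eq_w₀_or_eq_w₁_of_inStates {w : Fin 5 → Fin 5 → ℕ} (h : InStates chestnut w₀ {burst} w) :
    w = w₀ ∨ w = w₁ := by
  induction h with
  | refl => exact .inl rfl
  | step _ hb hr ih =>
    rw [Set.mem_singleton_iff.1 hb] at hr
    rcases ih with rfl | rfl
    exacts [.inr (resultSet_w₀_subset hr), .inl (resultSet_w₁_subset hr)]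

theorem eq_trail₀_of_perfect {t : TrailData (Fin 5) burst.m}
    (h : IsTotalLegalTrailD chestnut w₀ burst t) (hp : IsPerfectD chestnut w₀ burst t) :
    t = ⟨11, trail₀⟩ :=
  eq_trail₀_of_injective h (hp.injective_steps h.1.1)

theorem map_mirror_eq_trail₀_of_perfect {t : TrailData (Fin 5) burst.m}
    (h : IsTotalLegalTrailD chestnut w₁ burst t) (hp : IsPerfectD chestnut w₁ burst t) :
    t.map mirror = ⟨11, trail₀⟩ :=
  have hinj := mapConfig_injective (σ := mirror)
  eq_trail₀_of_injective (IsTotalLegalTrail.mirror h)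
    ((hinj.prodMap hinj).comp (hp.injective_steps h.1.1))

theorem perfectlyDet_chestnut : PerfectlyDet chestnut w₀ {burst} := by
  rintro w hw b rfl t t' h hp h' hp'
  rcases eq_w₀_or_eq_w₁_of_inStates hw with rfl | rfl
  · exact (eq_trail₀_of_perfect h hp).trans (eq_trail₀_of_perfect h' hp').symm
  · exact TrailData.map_injective ((map_mirror_eq_trail₀_of_perfect h hp).trans
      (map_mirror_eq_trail₀_of_perfect h' hp').symm)

/-- `trail₀` with the loop through positions 2 to 6 run twice. -/
def twoLoopTrail₀ : Fin 16 → Config (Fin 5) burst.m := fun j =>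
  trail₀ ⟨if (j : ℕ) < 6 then j else j - 4, by split <;> omega⟩

theorem not_stronglyDet_chestnut : ¬ StronglyDet chestnut w₀ {burst} := fun H =>
  absurd (congrArg Sigma.fst (H w₀ .refl burst rfl ⟨11, trail₀⟩ ⟨15, twoLoopTrail₀⟩
    (show IsTotalLegalTrail chestnut w₀ burst 11 trail₀ by decide)
    (show IsTotalLegalTrail chestnut w₀ burst 15 twoLoopTrail₀ by decide))) (by decide)

end ChestnutAutomaton

/-- There exist a soliton graph `G` and a set `B` of bursts for `G`
such that `A_B(G)` is perfectly deterministic but not strongly deterministic. -/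
theorem exists_perfectlyDet_not_stronglyDet :
    ∃ (V : Type), Finite V ∧
      ∃ (G : SGraph V) (w : V → V → ℕ) (B : Set (Burst V)),
        IsSolitonGraph G w ∧ (∀ b ∈ B, IsBurstFor G b) ∧
        PerfectlyDet G w B ∧ ¬ StronglyDet G w B := by
  refine ⟨Fin 5, inferInstance, chestnut, w₀, {burst}, isSolitonGraph_chestnut, ?_,
    perfectlyDet_chestnut, not_stronglyDet_chestnut⟩
  rintro b rfl
  unfold IsBurstFor
  decide

end Soliton
end

section
/- For every soliton graph G and every set B of bursts for G, the state set States(G,B) of the soliton automaton A_B(G) is finite; moreover, there exists a finite set B of bursts such that States(G,B)=States(G,B') for every set B' of bursts with B⊆B'. -/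
/- Formalization of multi-soliton automata (Bordihn–Schulz),
   following the definitions of the paper. -/

namespace Soliton

variable {V : Type}

/-- A single step preserves the bound 3 on weights. -/
lemma stepOk_bound {G : SGraph V} {b : Burst V} {c c' : Config V b.m}
    (h : StepOk G b c c') (hc : ∀ p q, c.1 p q ≤ 3) : ∀ p q, c'.1 p q ≤ 3 := by
  intro p q
  rcases h with ⟨-, hw⟩
  by_cases hm : (MovesAlong c.2 c'.2 p q ∨ MovesAlong c.2 c'.2 q p)
  · rw [(hw p q).1 hm]; omega
  · rw [(hw p q).2 hm]; exact hc p q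

/-- All weights along a trail are bounded by 3. -/
lemma trail_bound {G : SGraph V} {w0 : V → V → ℕ} {b : Burst V} {len : ℕ}
    {cfg : Fin (len + 1) → Config V b.m} (ht : IsTrail G w0 b len cfg)
    (hw0 : ∀ p q, w0 p q ≤ 3) :
    ∀ (j : ℕ) (h : j ≤ len), ∀ p q, (cfg ⟨j, by omega⟩).1 p q ≤ 3 := by
  intro j
  induction j with
  | zero =>
    intro _ p q
    have h0 := ht.1
    have he : (0 : Fin (len + 1)) = ⟨0, by omega⟩ := rfl
    rw [he] at h0
    rw [h0]
    exact hw0 p q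
  | succ n ih =>
    intro h p q
    exact stepOk_bound (ht.2.2.1 n (by omega)) (ih (by omega)) p q

lemma result_bound {G : SGraph V} {w' w'' : V → V → ℕ} {b : Burst V}
    (hr : w'' ∈ ResultSet G w' b) (hw : ∀ p q, w' p q ≤ 3) :
    ∀ p q, w'' p q ≤ 3 := by
  obtain ⟨len, cfg, ⟨⟨ht, -⟩, -⟩, hlast⟩ := hr
  have := trail_bound ht hw len (le_refl _)
  intro p q
  have hl : (Fin.last len) = ⟨len, by omega⟩ := rfl
  rw [← hlast, hl]
  exact this p q

lemma inStates_bound {G : SGraph V} {w : V → V → ℕ} {B : Set (Burst V)}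
    (hw : ∀ p q, w p q ≤ 3) {w' : V → V → ℕ} (h : InStates G w B w') :
    ∀ p q, w' p q ≤ 3 := by
  induction h with
  | refl => exact hw
  | step _ _ hr ih => exact result_bound hr ih

lemma inStates_mono {G : SGraph V} {w : V → V → ℕ} {B B' : Set (Burst V)}
    (hBB : B ⊆ B') {w' : V → V → ℕ} (h : InStates G w B w') :
    InStates G w B' w' := by
  induction h with
  | refl => exact InStates.refl
  | step _ hb hr ih => exact InStates.step ih (hBB hb) hr

/-- The set of boundedly-weighted functions is finite. -/
lemma finite_bounded [Finite V] :
    ({f : V → V → ℕ | ∀ p q, f p q ≤ 3}).Finite := by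
  have : ({f : V → V → ℕ | ∀ p q, f p q ≤ 3}) ⊆
      Set.range (fun g : V → V → Fin 4 => fun p q => ((g p q : ℕ))) := by
    intro f hf
    exact ⟨fun p q => ⟨f p q, by have := hf p q; omega⟩, rfl⟩
  exact (Set.finite_range _).subset this

/-- For every soliton graph `G` and every set `B` of bursts for `G`,
the state set `States(G,B)` is finite; moreover there is a finite set `B` of
bursts such that `States(G,B) = States(G,B')` for every set `B'` of bursts with
`B ⊆ B'`. -/
theorem states_finite_and_saturated {V : Type} [Finite V]
    (G : SGraph V) (w : V → V → ℕ) (hsol : IsSolitonGraph G w) :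
    (∀ B : Set (Burst V), (∀ b ∈ B, IsBurstFor G b) →
      (StatesSet G w B).Finite) ∧
    ∃ B : Set (Burst V), B.Finite ∧ (∀ b ∈ B, IsBurstFor G b) ∧
      ∀ B' : Set (Burst V), B ⊆ B' → (∀ b ∈ B', IsBurstFor G b) →
        StatesSet G w B = StatesSet G w B' := by
  classical
  have hw3 : ∀ p q, w p q ≤ 3 := by
    intro p q
    by_cases h : G.adj p q
    · rcases hsol.1.2.1 p q h with h1 | h1 <;> omega
    · rw [hsol.1.2.2 p q h]; omega
  have hfin : ∀ B : Set (Burst V), (StatesSet G w B).Finite := by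
    intro B
    refine finite_bounded.subset ?_
    intro w' hw'
    exact inStates_bound hw3 hw'
  refine ⟨fun B _ => hfin B, ?_⟩
  set Ball : Set (Burst V) := {b | IsBurstFor G b} with hBall
  set S : Set (V → V → ℕ) := StatesSet G w Ball with hSdef
  have hSfin : S.Finite := hfin Ball
  -- choice function picking a burst realizing a transition
  set f : (V → V → ℕ) × (V → V → ℕ) → Set (Burst V) := fun p =>
    if h : ∃ b, b ∈ Ball ∧ p.2 ∈ ResultSet G p.1 b then {h.choose} else ∅ with hf
  set B : Set (Burst V) := ⋃ p ∈ S ×ˢ S, f p with hB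
  have hBfin : B.Finite := by
    refine Set.Finite.biUnion (hSfin.prod hSfin) ?_
    intro p _
    by_cases h : ∃ b, b ∈ Ball ∧ p.2 ∈ ResultSet G p.1 b
    · simp only [hf, dif_pos h]; exact Set.finite_singleton _
    · simp only [hf, dif_neg h]; exact Set.finite_empty
  have hBsub : B ⊆ Ball := by
    intro b hb
    simp only [hB, Set.mem_iUnion] at hb
    obtain ⟨p, _, hbp⟩ := hb
    by_cases h : ∃ b, b ∈ Ball ∧ p.2 ∈ ResultSet G p.1 b
    · simp only [hf, dif_pos h, Set.mem_singleton_iff] at hbp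
      rw [hbp]; exact h.choose_spec.1
    · simp only [hf, dif_neg h] at hbp; exact absurd hbp (Set.notMem_empty b)
  have hcover : StatesSet G w Ball ⊆ StatesSet G w B := by
    intro w' hw'
    induction hw' with
    | refl => exact InStates.refl
    | @step w' w'' b h hb hr ih =>
        have hw'S : w' ∈ S := h
        have hw''S : w'' ∈ S := InStates.step h hb hr
        have hex : ∃ b, b ∈ Ball ∧ w'' ∈ ResultSet G w' b := ⟨b, hb, hr⟩
        have hmem : hex.choose ∈ B := by
          simp only [hB, Set.mem_iUnion]
          refine ⟨(w', w''), Set.mem_prod.2 ⟨hw'S, hw''S⟩, ?_⟩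
          simp only [hf, dif_pos hex, Set.mem_singleton_iff]
        exact InStates.step ih hmem hex.choose_spec.2
  refine ⟨B, hBfin, fun b hb => hBsub hb, ?_⟩
  intro B' hBB' hB'for
  have hB'sub : B' ⊆ Ball := fun b hb => hB'for b hb
  apply Set.Subset.antisymm
  · exact fun w' hw' => inStates_mono hBB' hw'
  · intro w' hw'
    exact hcover (inStates_mono hB'sub hw')

end Soliton
end

section
/- Let G be a soliton graph and b a burst for G. Then every element of Result(G,b) is again a soliton graph; that is, every weighted graph obtained from G by a total legal configuration trail for G and b satisfies the soliton graph conditions on node weights. -/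
/- Formalization of multi-soliton automata (Bordihn–Schulz),
   following the definitions of the paper. -/

namespace Soliton

variable {V : Type}

/- ---------- Auxiliary development for STATEMENT 13 ---------- -/

section Aux

open Classical

variable {V : Type}

/-- The node a soliton position occupies, if any. -/
def toNode : SolPos V → Option V
  | SolPos.node n => some n
  | SolPos.wait _ => none

/-- The move (source, target) performed by soliton `i` in the step `c → c'`,
if it moves between nodes. -/
def dirS {m : ℕ} (c c' : Config V m) (i : Fin m) : Option (V × V) :=
  (toNode (c.2 i)).bind fun p => (toNode (c'.2 i)).map fun r => (p, r)

lemma dirS_eq_some {m : ℕ} {c c' : Config V m} {i : Fin m} {p r : V} :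
    dirS c c' i = some (p, r) ↔ c.2 i = SolPos.node p ∧ c'.2 i = SolPos.node r := by
  unfold dirS
  cases hp : c.2 i <;> cases hr : c'.2 i <;> simp [toNode]

lemma dirS_some_of {m : ℕ} {c c' : Config V m} {i : Fin m} {p r : V}
    (h1 : c.2 i = SolPos.node p) (h2 : c'.2 i = SolPos.node r) :
    dirS c c' i = some (p, r) := dirS_eq_some.mpr ⟨h1, h2⟩

/-- Contribution of a soliton that has just arrived at `q`. -/
noncomputable def corrI {m : ℕ} (c c' : Config V m) (q : V) (i : Fin m) : ℤ :=
  (dirS c c' i).elim 0 (fun pr => if pr.2 = q then 2 * (c'.1 pr.1 q : ℤ) - 3 else 0)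

/-- Contribution of a soliton leaving `q`. -/
noncomputable def outI {m : ℕ} (c c' : Config V m) (q : V) (i : Fin m) : ℤ :=
  (dirS c c' i).elim 0
    (fun pr => if pr.2 = q then 0 else if pr.1 = q then 3 - 2 * (c.1 q pr.2 : ℤ) else 0)

/-- The endpoint, other than `q`, of the edge traversed by soliton `i`. -/
noncomputable def eMap {m : ℕ} (c c' : Config V m) (q : V) (i : Fin m) : V :=
  (dirS c c' i).elim q (fun pr => if pr.2 = q then pr.1 else pr.2)

lemma posStep_adj {G : SGraph V} {b : Burst V} {i : Fin b.m} {p r : V}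
    (h : PosStep G b i (SolPos.node p) (SolPos.node r)) : G.adj p r := by
  rcases h with ⟨h, _⟩ | ⟨h, _⟩ | ⟨k, h, _⟩ | ⟨n, hn, ⟨_, h⟩ | ⟨n', ha, h⟩⟩ <;> simp_all

lemma moves_adj {G : SGraph V} {b : Burst V} {c c' : Config V b.m}
    (hstep : StepOk G b c c') {p r : V} (h : MovesAlong c.2 c'.2 p r) : G.adj p r := by
  obtain ⟨i, h1, h2⟩ := h
  have := hstep.1 i
  rw [h1, h2] at this
  exact posStep_adj this

lemma dirS_adj {G : SGraph V} {b : Burst V} {c c' : Config V b.m}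
    (hstep : StepOk G b c c') {i : Fin b.m} {p r : V}
    (h : dirS c c' i = some (p, r)) : G.adj p r := by
  obtain ⟨h1, h2⟩ := dirS_eq_some.mp h
  exact moves_adj hstep ⟨i, h1, h2⟩

lemma weighting_step {G : SGraph V} {b : Burst V} {c c' : Config V b.m}
    (hstep : StepOk G b c c') (hW : IsWeighting G c.1) : IsWeighting G c'.1 := by
  obtain ⟨hsymm, hedge, hnon⟩ := hW
  have hws := hstep.2
  refine ⟨?_, ?_, ?_⟩
  · intro u v
    by_cases h : MovesAlong c.2 c'.2 u v ∨ MovesAlong c.2 c'.2 v u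
    · rw [(hws u v).1 h, (hws v u).1 h.symm, hsymm u v]
    · rw [(hws u v).2 h, (hws v u).2 (fun hh => h hh.symm), hsymm u v]
  · intro u v huv
    by_cases h : MovesAlong c.2 c'.2 u v ∨ MovesAlong c.2 c'.2 v u
    · rw [(hws u v).1 h]
      rcases hedge u v huv with h1 | h1 <;> omega
    · rw [(hws u v).2 h]
      exact hedge u v huv
  · intro u v huv
    have h : ¬(MovesAlong c.2 c'.2 u v ∨ MovesAlong c.2 c'.2 v u) := by
      rintro (h | h)
      · exact huv (moves_adj hstep h)
      · exact huv (G.symm _ _ (moves_adj hstep h))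
    rw [(hws u v).2 h]
    exact hnon u v huv

lemma nodeWeight_eq_sum [Fintype V] (w : V → V → ℕ) (n : V) :
    nodeWeight w n = ∑ v, w n v := finsum_eq_sum_of_fintype _

lemma ext_weight [Fintype V] {G : SGraph V} {w : V → V → ℕ}
    (hW : IsWeighting G w) {n : V} (hn : Exterior G n) :
    nodeWeight w n = 1 ∨ nodeWeight w n = 2 := by
  have h1 : Nat.card {v // G.adj n v} = 1 := hn
  rw [Nat.card_eq_one_iff_unique] at h1
  obtain ⟨hs, ⟨⟨v0, hv0⟩⟩⟩ := h1
  rw [nodeWeight_eq_sum]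
  rw [Finset.sum_eq_single v0]
  · exact hW.2.1 n v0 hv0
  · intro v _ hne
    apply hW.2.2
    intro hadj
    exact hne (congrArg Subtype.val (hs.elim ⟨v, hadj⟩ ⟨v0, hv0⟩))
  · intro h
    exact absurd (Finset.mem_univ v0) h

lemma not_ext_of_int {G : SGraph V} {n : V} (h : Interior G n) : ¬ Exterior G n := by
  unfold Interior at h
  unfold Exterior
  omega

lemma corrI_eq_zero {m : ℕ} {c c' : Config V m} {q : V} {i : Fin m}
    (h : ∀ r : V, c'.2 i ≠ SolPos.node r) : corrI c c' q i = 0 := by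
  unfold corrI
  cases hd : dirS c c' i with
  | none => rfl
  | some pr =>
    exact absurd (dirS_eq_some.mp (by rw [hd])).2 (h pr.2)

lemma corrI_eq_zero' {m : ℕ} {c c' : Config V m} {q : V} {i : Fin m}
    (h : c'.2 i ≠ SolPos.node q) : corrI c c' q i = 0 := by
  unfold corrI
  cases hd : dirS c c' i with
  | none => rfl
  | some pr =>
    obtain ⟨_, h2⟩ := dirS_eq_some.mp (show dirS c c' i = some (pr.1, pr.2) by rw [hd])
    simp only [Option.elim_some]
    rw [if_neg (show ¬ pr.2 = q from fun hq => h (by rw [← hq]; exact h2))]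

lemma outI_eq_zero {m : ℕ} {c c' : Config V m} {q : V} {i : Fin m}
    (h : c.2 i ≠ SolPos.node q) : outI c c' q i = 0 := by
  unfold outI
  cases hd : dirS c c' i with
  | none => rfl
  | some pr =>
    obtain ⟨h1, _⟩ := dirS_eq_some.mp (show dirS c c' i = some (pr.1, pr.2) by rw [hd])
    simp only [Option.elim_some]
    by_cases h2 : pr.2 = q
    · rw [if_pos h2]
    · rw [if_neg h2, if_neg (show ¬ pr.1 = q from fun hpq => h (by rw [← hpq]; exact h1))]

/-- The key step lemma: the change in node weight is accounted for by
the arriving and leaving solitons. -/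
lemma nodeWeight_step [Fintype V] {G : SGraph V} {b : Burst V} {c c' : Config V b.m}
    (hstep : StepOk G b c c') (hleg : LegalStep G c c') (hW : IsWeighting G c.1)
    (q : V) :
    (nodeWeight c'.1 q : ℤ) =
      (nodeWeight c.1 q : ℤ) + ∑ i, (corrI c c' q i + outI c c' q i) := by
  classical
  have hws := hstep.2
  set T : Finset V :=
    Finset.univ.filter (fun v => MovesAlong c.2 c'.2 q v ∨ MovesAlong c.2 c'.2 v q) with hT
  set S : Finset (Fin b.m) :=
    Finset.univ.filter (fun i => ∃ p r, dirS c c' i = some (p, r) ∧ (p = q ∨ r = q)) with hS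
  -- Step 1
  have step1 : (nodeWeight c'.1 q : ℤ) - (nodeWeight c.1 q : ℤ)
      = ∑ v ∈ T, (3 - 2 * (c.1 q v : ℤ)) := by
    rw [nodeWeight_eq_sum, nodeWeight_eq_sum]
    push_cast
    rw [← Finset.sum_sub_distrib]
    rw [← Finset.sum_subset (Finset.subset_univ T)
      (by
        intro v _ hv
        rw [hT, Finset.mem_filter] at hv
        push_neg at hv
        have hv' := hv (Finset.mem_univ v)
        have hnm : ¬(MovesAlong c.2 c'.2 q v ∨ MovesAlong c.2 c'.2 v q) := by tauto
        rw [(hws q v).2 hnm]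
        ring)]
    apply Finset.sum_congr rfl
    intro v hv
    rw [hT, Finset.mem_filter] at hv
    have hadj : G.adj q v := by
      rcases hv.2 with h | h
      · exact moves_adj hstep h
      · exact G.symm _ _ (moves_adj hstep h)
    have hflip : c'.1 q v = 3 - c.1 q v := (hws q v).1 hv.2
    have hbd : c.1 q v = 1 ∨ c.1 q v = 2 := hW.2.1 q v hadj
    omega
  -- Step 2
  have step2 : ∑ i, (corrI c c' q i + outI c c' q i)
      = ∑ i ∈ S, (3 - 2 * (c.1 q (eMap c c' q i) : ℤ)) := by
    rw [← Finset.sum_subset (Finset.subset_univ S)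
      (by
        intro i _ hi
        rw [hS, Finset.mem_filter] at hi
        push_neg at hi
        have hi' := hi (Finset.mem_univ i)
        cases hd : dirS c c' i with
        | none => simp [corrI, outI, hd]
        | some pr =>
          have h := hi' pr.1 pr.2 (by rw [hd])
          simp [corrI, outI, hd, h.1, h.2])]
    apply Finset.sum_congr rfl
    intro i hi
    rw [hS, Finset.mem_filter] at hi
    obtain ⟨p, r, hd, htouch⟩ := hi.2
    obtain ⟨h1, h2⟩ := dirS_eq_some.mp hd
    have hadjpr : G.adj p r := dirS_adj hstep hd
    have hpr : p ≠ r := fun h => G.loopless p (h ▸ hadjpr)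
    by_cases hrq : r = q
    · rw [hrq] at hd h2 hadjpr hpr
      have hflip : c'.1 p q = 3 - c.1 p q := (hws p q).1 (Or.inl ⟨i, h1, h2⟩)
      have hbd : c.1 p q = 1 ∨ c.1 p q = 2 := hW.2.1 p q hadjpr
      have hsym : c.1 q p = c.1 p q := hW.1 q p
      simp only [corrI, outI, eMap, hd, Option.elim_some, eq_self_iff_true, if_true]
      omega
    · have hpq : p = q := htouch.resolve_right hrq
      rw [hpq] at hd h1 hadjpr
      simp only [corrI, outI, eMap, hd, Option.elim_some, hrq, if_false, eq_self_iff_true, if_true]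
      ring
  -- Step 3: bijection between S and T
  have step3 : ∑ i ∈ S, (3 - 2 * (c.1 q (eMap c c' q i) : ℤ))
      = ∑ v ∈ T, (3 - 2 * (c.1 q v : ℤ)) := by
    apply Finset.sum_bij (fun i _ => eMap c c' q i)
    · intro i hi
      rw [hS, Finset.mem_filter] at hi
      obtain ⟨p, r, hd, htouch⟩ := hi.2
      obtain ⟨h1, h2⟩ := dirS_eq_some.mp hd
      rw [hT, Finset.mem_filter]
      refine ⟨Finset.mem_univ _, ?_⟩
      by_cases hrq : r = q
      · rw [hrq] at hd h2
        simp only [eMap, hd, Option.elim_some, eq_self_iff_true, if_true]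
        exact Or.inr ⟨i, h1, h2⟩
      · have hpq : p = q := htouch.resolve_right hrq
        rw [hpq] at hd h1
        simp only [eMap, hd, Option.elim_some, hrq, if_false]
        exact Or.inl ⟨i, h1, h2⟩
    · intro i1 hi1 i2 hi2 heq
      by_contra hne
      rw [hS, Finset.mem_filter] at hi1 hi2
      obtain ⟨p1, r1, hd1, ht1⟩ := hi1.2
      obtain ⟨p2, r2, hd2, ht2⟩ := hi2.2
      obtain ⟨h11, h12⟩ := dirS_eq_some.mp hd1
      obtain ⟨h21, h22⟩ := dirS_eq_some.mp hd2
      have hadj1 : G.adj p1 r1 := dirS_adj hstep hd1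
      have hadj2 : G.adj p2 r2 := dirS_adj hstep hd2
      by_cases hrq1 : r1 = q <;> by_cases hrq2 : r2 = q
      · -- both incoming
        rw [hrq1] at hd1 h12
        rw [hrq2] at hd2 h22
        simp only [eMap, hd1, hd2, Option.elim_some, eq_self_iff_true, if_true] at heq
        rw [← heq] at h21
        exact hleg.1 i1 i2 hne p1 h11 h21 (by rw [h12, h22])
      · -- i1 incoming, i2 outgoing
        have hpq2 : p2 = q := ht2.resolve_right hrq2
        rw [hrq1] at hd1 h12 hadj1
        rw [hpq2] at hd2 h21
        simp only [eMap, hd1, hd2, Option.elim_some, eq_self_iff_true, if_true, hrq2, if_false] at heq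
        rw [← heq] at h22
        exact hleg.2 i1 i2 hne p1 q h11 h21 hadj1 ⟨h12, h22⟩
      · -- i1 outgoing, i2 incoming
        have hpq1 : p1 = q := ht1.resolve_right hrq1
        rw [hrq2] at hd2 h22 hadj2
        rw [hpq1] at hd1 h11
        simp only [eMap, hd1, hd2, Option.elim_some, hrq1, if_false, eq_self_iff_true, if_true] at heq
        rw [heq] at h12
        exact hleg.2 i2 i1 (Ne.symm hne) p2 q h21 h11 hadj2 ⟨h22, h12⟩
      · -- both outgoing
        have hpq1 : p1 = q := ht1.resolve_right hrq1
        have hpq2 : p2 = q := ht2.resolve_right hrq2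
        rw [hpq1] at hd1 h11
        rw [hpq2] at hd2 h21
        simp only [eMap, hd1, hd2, Option.elim_some, hrq1, if_false, hrq2] at heq
        rw [← heq] at h22
        exact hleg.1 i1 i2 hne q h11 h21 (by rw [h12, h22])
    · intro v hv
      rw [hT, Finset.mem_filter] at hv
      rcases hv.2 with ⟨i, h1, h2⟩ | ⟨i, h1, h2⟩
      · -- soliton moves q → v
        have hd : dirS c c' i = some (q, v) := dirS_some_of h1 h2
        have hadj : G.adj q v := dirS_adj hstep hd
        have hvq : ¬ v = q := fun h => G.loopless q (h ▸ hadj)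
        refine ⟨i, ?_, ?_⟩
        · rw [hS, Finset.mem_filter]
          exact ⟨Finset.mem_univ _, q, v, hd, Or.inl rfl⟩
        · simp only [eMap, hd, Option.elim_some, hvq, if_false]
      · -- soliton moves v → q
        have hd : dirS c c' i = some (v, q) := dirS_some_of h1 h2
        refine ⟨i, ?_, ?_⟩
        · rw [hS, Finset.mem_filter]
          exact ⟨Finset.mem_univ _, v, q, hd, Or.inr rfl⟩
        · simp only [eMap, hd, Option.elim_some, eq_self_iff_true, if_true]
    · intro i hi
      rfl
  rw [step2, step3]
  omega

/-- Cancellation: a soliton leaving an interior node removes exactly the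
correction it contributed on arrival. -/
lemma out_eq_neg_corr {G : SGraph V} {b : Burst V} {c₀ c c' : Config V b.m}
    (hb : IsBurstFor G b)
    (hstep₀ : StepOk G b c₀ c) (hstep : StepOk G b c c')
    (h2 : TwoStepOk G b c₀ c c')
    (hW₀ : IsWeighting G c₀.1) (hW : IsWeighting G c.1)
    {q : V} (hq : Interior G q) (i : Fin b.m) :
    outI c c' q i = - corrI c₀ c q i := by
  classical
  have hqext : ¬ Exterior G q := not_ext_of_int hq
  cases hd : dirS c c' i with
  | none =>
    have hnotq : c.2 i ≠ SolPos.node q := by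
      intro hcq
      -- soliton at interior q must move to a node
      rcases hstep.1 i with ⟨h, _⟩ | ⟨h, _⟩ | ⟨k, h, _⟩ | ⟨n, hn, ⟨hex, h'⟩ | ⟨n', ha, h'⟩⟩
      · rw [hcq] at h; exact absurd h (by simp)
      · rw [hcq] at h; exact absurd h (by simp)
      · rw [hcq] at h; exact absurd h (by simp)
      · rw [hcq] at hn
        injection hn with hnq
        exact hqext (by rw [hnq, hex]; exact (hb i).2)
      · rw [dirS_some_of hn h'] at hd
        exact absurd hd (by simp)
    rw [outI_eq_zero hnotq, corrI_eq_zero' hnotq]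
    ring
  | some pr =>
    obtain ⟨p, r⟩ := pr
    obtain ⟨h1, h2'⟩ := dirS_eq_some.mp hd
    have hadjpr : G.adj p r := dirS_adj hstep hd
    have hner : p ≠ r := fun h => G.loopless p (h ▸ hadjpr)
    by_cases hrq : r = q
    · rw [hrq] at hd hner
      have hnotq : c.2 i ≠ SolPos.node q := by
        rw [h1]
        intro hh
        exact hner (by injection hh)
      rw [corrI_eq_zero' hnotq]
      simp only [outI, hd, Option.elim_some, eq_self_iff_true, if_true]
      ring
    · by_cases hpq : p = q
      · rw [hpq] at hd h1 hadjpr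
        -- the soliton was at the interior node q and moves on to r
        have hprev : ∃ p₀, c₀.2 i = SolPos.node p₀ ∧ G.adj p₀ q := by
          rcases hstep₀.1 i with ⟨h, h'⟩ | ⟨h, h'⟩ | ⟨k, h, h'⟩ |
            ⟨n, hn, ⟨hex, h'⟩ | ⟨n', ha, h'⟩⟩
          · rw [h1] at h'; exact absurd h' (by simp)
          · rw [h1] at h'
            injection h' with hh
            exact (hqext (by rw [hh]; exact (hb i).1)).elim
          · rw [h1] at h'; exact absurd h' (by simp)
          · rw [h1] at h'; exact absurd h' (by simp)
          · rw [h1] at h'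
            injection h' with hh
            exact ⟨n, hn, by rw [hh]; exact ha⟩
        obtain ⟨p₀, hn0, hadj0⟩ := hprev
        have halt : c₀.1 p₀ q ≠ c.1 q r := (h2 i).2.2.1 p₀ q r hn0 h1 hq h2'
        have hflip : c.1 p₀ q = 3 - c₀.1 p₀ q :=
          (hstep₀.2 p₀ q).1 (Or.inl ⟨i, hn0, h1⟩)
        have hb0 : c₀.1 p₀ q = 1 ∨ c₀.1 p₀ q = 2 := hW₀.2.1 p₀ q hadj0
        have hb1 : c.1 q r = 1 ∨ c.1 q r = 2 := hW.2.1 q r hadjpr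
        have hcorr : corrI c₀ c q i = 2 * (c.1 p₀ q : ℤ) - 3 := by
          simp only [corrI, dirS_some_of hn0 h1, Option.elim_some, eq_self_iff_true, if_true]
        have hout : outI c c' q i = 3 - 2 * (c.1 q r : ℤ) := by
          simp only [outI, hd, Option.elim_some, hrq, if_false, eq_self_iff_true, if_true]
        rw [hcorr, hout]
        omega
      · have hnotq : c.2 i ≠ SolPos.node q := by
          rw [h1]
          intro hh
          exact hpq (by injection hh)
        rw [outI_eq_zero hnotq, corrI_eq_zero' hnotq]
        ring

end Aux

/-- Every element of `Result(G,b)` is again a soliton graph. -/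
theorem result_is_soliton_graph {V : Type} [Finite V]
    (G : SGraph V) (w : V → V → ℕ) (b : Burst V)
    (hsol : IsSolitonGraph G w) (hb : IsBurstFor G b) :
    ∀ w' ∈ ResultSet G w b, IsSolitonGraph G w' := by
  classical
  cases nonempty_fintype V
  intro w' hw'
  obtain ⟨len, cfg, ⟨⟨⟨hw0, hpi0, hstep, hfirst, htwo, hnotfinal⟩, hleg⟩, hfinal⟩, hres⟩ := hw'
  subst hres
  -- the trail has positive length
  have hlen : 0 < len := by
    by_contra h
    have hlen0 : len = 0 := by omega
    subst hlen0
    have harr : b.arrival ⟨0, b.hm⟩ = 0 := by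
      unfold Burst.arrival
      apply Finset.sum_eq_zero
      intro j hj
      rw [Finset.mem_filter] at hj
      have hj0 : j = ⟨0, b.hm⟩ := by
        have hle := hj.2
        rw [Fin.le_def] at hle
        have h0 : ((⟨0, b.hm⟩ : Fin b.m) : ℕ) = 0 := rfl
        exact Fin.ext (by omega)
      rw [hj0, b.delay_zero]
    have hfi := hfinal ⟨0, b.hm⟩
    have h00 : Fin.last 0 = (0 : Fin 1) := rfl
    rw [h00, hpi0] at hfi
    rw [initPos, if_pos harr] at hfi
    exact absurd hfi (by simp)
  -- the shifted sequence of configurations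
  let cseq : ℕ → Config V b.m := fun j => cfg ⟨min j len, by omega⟩
  have hc : ∀ (j : ℕ) (h : j ≤ len), cseq j = cfg ⟨j, by omega⟩ :=
    fun j h => congrArg cfg (Fin.ext (min_eq_left h))
  have hcfg0 : cseq 0 = cfg 0 := congrArg cfg (Fin.ext (by simp))
  have hsteps : ∀ j, j < len → StepOk G b (cseq j) (cseq (j + 1)) := by
    intro j hj
    rw [hc j (by omega), hc (j + 1) (by omega)]
    exact hstep j hj
  have hlegs : ∀ j, j < len → LegalStep G (cseq j) (cseq (j + 1)) := by
    intro j hj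
    rw [hc j (by omega), hc (j + 1) (by omega)]
    exact hleg j hj
  have htwos : ∀ j, j + 2 ≤ len → TwoStepOk G b (cseq j) (cseq (j + 1)) (cseq (j + 2)) := by
    intro j hj
    rw [hc j (by omega), hc (j + 1) (by omega), hc (j + 2) (by omega)]
    exact htwo j hj
  -- every configuration in the trail carries a weighting
  have hWall : ∀ j, j ≤ len → IsWeighting G (cseq j).1 := by
    intro j
    induction j with
    | zero =>
      intro _
      rw [hcfg0, hw0]
      exact hsol.1
    | succ j ih =>
      intro h
      exact weighting_step (hsteps j (by omega)) (ih (by omega))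
  -- initially no soliton occupies an interior node
  have hInit : ∀ (i : Fin b.m) (q : V), Interior G q → (cseq 0).2 i ≠ SolPos.node q := by
    intro i q hq
    rw [hcfg0, hpi0]
    unfold initPos
    split
    · intro hh
      injection hh with hh'
      exact not_ext_of_int hq (hh' ▸ (hb i).1)
    · simp
  -- the invariant on interior node weights
  have hInv : ∀ j, j ≤ len → ∀ q, Interior G q →
      (nodeWeight (cseq j).1 q : ℤ) = (degree G q : ℤ) + 1 +
        (if j = 0 then 0 else ∑ i, corrI (cseq (j - 1)) (cseq j) q i) := by
    intro j
    induction j with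
    | zero =>
      intro _ q hq
      rw [if_pos rfl, hcfg0, hw0]
      have hqw := hsol.2.2.2.1 q hq
      rw [hqw]
      push_cast
      ring
    | succ j ih =>
      intro h q hq
      have hA := nodeWeight_step (hsteps j (by omega)) (hlegs j (by omega))
        (hWall j (by omega)) q
      rw [Finset.sum_add_distrib] at hA
      rw [if_neg (by omega)]
      have hj1 : j + 1 - 1 = j := by omega
      rw [hj1]
      cases j with
      | zero =>
        have hout0 : ∑ i, outI (cseq 0) (cseq 1) q i = 0 :=
          Finset.sum_eq_zero (fun i _ => outI_eq_zero (hInit i q hq))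
        have hbase := ih (by omega) q hq
        rw [if_pos rfl] at hbase
        linarith
      | succ j' =>
        have hcancel : ∑ i, outI (cseq (j' + 1)) (cseq (j' + 2)) q i
            = - ∑ i, corrI (cseq j') (cseq (j' + 1)) q i := by
          rw [← Finset.sum_neg_distrib]
          exact Finset.sum_congr rfl (fun i _ =>
            out_eq_neg_corr hb (hsteps j' (by omega)) (hsteps (j' + 1) (by omega))
              (htwos j' (by omega)) (hWall j' (by omega)) (hWall (j' + 1) (by omega)) hq i)
        have hprev := ih (by omega) q hq
        rw [if_neg (by omega)] at hprev
        have hj' : j' + 1 - 1 = j' := by omega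
        rw [hj'] at hprev
        linarith
  -- assemble the soliton-graph conditions for the final weighting
  have hfin' : ∀ i, (cfg (⟨len, by omega⟩ : Fin (len + 1))).2 i = SolPos.wait 0 :=
    fun i => hfinal i
  have hWfin : IsWeighting G (cfg (Fin.last len)).1 := by
    have h := hWall len le_rfl
    rw [hc len le_rfl] at h
    exact h
  refine ⟨hWfin, hsol.2.1, ?_, ?_, hsol.2.2.2.2⟩
  · intro n hn
    exact ext_weight hWfin hn
  · intro q hq
    have hI := hInv len le_rfl q hq
    rw [if_neg (by omega)] at hI
    have hzero : ∑ i, corrI (cseq (len - 1)) (cseq len) q i = 0 := by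
      apply Finset.sum_eq_zero
      intro i _
      apply corrI_eq_zero
      intro r
      rw [hc len le_rfl, hfin' i]
      simp
    rw [hzero, hc len le_rfl] at hI
    have hI' : (nodeWeight (cfg (Fin.last len)).1 q : ℤ) = ((degree G q + 1 : ℕ) : ℤ) := by
      push_cast
      have hfl : (Fin.last len) = (⟨len, by omega⟩ : Fin (len + 1)) := rfl
      rw [hfl]
      linarith
    exact_mod_cast hI'

end Soliton
end
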